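/- The refined Lassalle sequence is symmetric: for every k ≥ 0 and 1 ≤ ℓ ≤ 2k+1, A_{k+1}(ℓ) = A_{k+1}(2k+2−ℓ). -/

import Mathlib

/-- Two blocks `B`, `B'` form a crossing: there are `i, k ∈ B` and `j, l ∈ B'`
with `i < j < k < l` or `i > j > k > l`. -/
def Crosses (B B' : Finset ℕ) : Prop :=
  ∃ i ∈ B, ∃ k ∈ B, ∃ j ∈ B', ∃ l ∈ B',
    (i < j ∧ j < k ∧ k < l) ∨ (i > j ∧ j > k ∧ k > l)

/-- `ρ` is a set partition of `{0, ..., n-1}`. -/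
def IsPartitionOf (n : ℕ) (ρ : Finset (Finset ℕ)) : Prop :=
  (∀ B ∈ ρ, B.Nonempty) ∧
  (∀ B ∈ ρ, ∀ B' ∈ ρ, B ≠ B' → Disjoint B B') ∧
  ρ.sup id = Finset.range n

/-- `r` is an orientation of the crossing graph `G(ρ)`: it relates exactly the
pairs of distinct crossing blocks of `ρ`, choosing one direction for each edge. -/
def IsOrientation (ρ : Finset (Finset ℕ)) (r : Finset ℕ → Finset ℕ → Prop) : Prop :=
  (∀ B B', r B B' → B ∈ ρ ∧ B' ∈ ρ ∧ B ≠ B' ∧ Crosses B B') ∧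
  (∀ B ∈ ρ, ∀ B' ∈ ρ, B ≠ B' → Crosses B B' → (r B B' ↔ ¬ r B' B))

/-- An orientation is acyclic if it has no directed cycle. -/
def AcyclicRel (r : Finset ℕ → Finset ℕ → Prop) : Prop :=
  ∀ B, ¬ Relation.TransGen r B B

/-- `r` is a root-connected orientation of `G(ρ)` with root `S`: it is an acyclic
orientation and `S` is its unique source. -/
def RootConnected (ρ : Finset (Finset ℕ)) (r : Finset ℕ → Finset ℕ → Prop)
    (S : Finset ℕ) : Prop :=
  IsOrientation ρ r ∧ AcyclicRel r ∧ S ∈ ρ ∧ (∀ B', ¬ r B' S) ∧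
    (∀ B ∈ ρ, (∀ B', ¬ r B' B) → B = S)

/-- `ρ ∈ M_S(n)`: a partition of `{0,...,n-1}` with `S` as a block and all
other blocks of size 2. -/
def MSPartition (n : ℕ) (S : Finset ℕ) (ρ : Finset (Finset ℕ)) : Prop :=
  IsPartitionOf n ρ ∧ S ∈ ρ ∧ ∀ B ∈ ρ, B ≠ S → B.card = 2

/-- The number of pairs `(ρ, r)` with `ρ ∈ M_S(n)` and `r` a root-connected
orientation of `G(ρ)` with root `S`.  (This is `A_{k+1}(S)` when `n = |S| + 2k`.) -/
noncomputable def countA (n : ℕ) (S : Finset ℕ) : ℕ :=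
  Nat.card {p : Finset (Finset ℕ) × (Finset ℕ → Finset ℕ → Prop) //
    MSPartition n S p.1 ∧ RootConnected p.1 p.2 S}


/-!
Let `σ` be the reflection `i ↦ -i mod n` of `{0, …, n-1}`. Whether two chords cross depends
only on the cyclic order of their endpoints, and `σ` merely reverses that order, so relabelling
blocks by `σ` (and transporting the orientation along it) is an involution on the pairs counted
by `countA n S` that turns them into the pairs counted by `countA n (σ S)`. For `S = {0, ℓ}` the
image is `{0, n - ℓ}`.
-/

open Finset Function

def circleReflect (n i : ℕ) : ℕ := if i = 0 then 0 else if i < n then n - i else i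

lemma circleReflect_involutive (n : ℕ) : Involutive (circleReflect n) := by
  intro i; unfold circleReflect; split_ifs <;> omega

lemma circleReflect_lt {n x : ℕ} (hx : x < n) : circleReflect n x < n := by
  unfold circleReflect; split_ifs <;> omega

lemma circleReflect_lt_circleReflect_iff {n x y : ℕ} (hx : x < n) (hy : y < n) :
    circleReflect n x < circleReflect n y ↔ y ≠ 0 ∧ (x = 0 ∨ y < x) := by
  unfold circleReflect; split_ifs <;> omega

lemma Crosses.image_circleReflect {n : ℕ} {B B' : Finset ℕ}
    (hB : B ⊆ range n) (hB' : B' ⊆ range n) (h : Crosses B B') :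
    Crosses (B.image (circleReflect n)) (B'.image (circleReflect n)) := by
  obtain ⟨i, hi, k, hk, j, hj, l, hl, hord⟩ := h
  have hin := mem_range.1 (hB hi); have hkn := mem_range.1 (hB hk)
  have hjn := mem_range.1 (hB' hj); have hln := mem_range.1 (hB' hl)
  have hlt {x y : ℕ} := @circleReflect_lt_circleReflect_iff n x y
  have mem {x : ℕ} {C : Finset ℕ} (hx : x ∈ C) := mem_image_of_mem (circleReflect n) hx
  -- `circleReflect` reverses the order of the positive points but keeps `0` least: a pattern
  -- `i < j < k < l` is reversed, except that `i = 0` stays first.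
  rcases hord with ⟨o1, o2, o3⟩ | ⟨o1, o2, o3⟩
  · by_cases hz : i = 0
    · exact ⟨_, mem hi, _, mem hk, _, mem hl, _, mem hj, Or.inl
        ⟨(hlt hin hln).2 (by omega), (hlt hln hkn).2 (by omega), (hlt hkn hjn).2 (by omega)⟩⟩
    · exact ⟨_, mem hi, _, mem hk, _, mem hj, _, mem hl, Or.inr
        ⟨(hlt hjn hin).2 (by omega), (hlt hkn hjn).2 (by omega), (hlt hln hkn).2 (by omega)⟩⟩
  · by_cases hz : l = 0
    · exact ⟨_, mem hk, _, mem hi, _, mem hj, _, mem hl, Or.inr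
        ⟨(hlt hjn hkn).2 (by omega), (hlt hin hjn).2 (by omega), (hlt hln hin).2 (by omega)⟩⟩
    · exact ⟨_, mem hi, _, mem hk, _, mem hj, _, mem hl, Or.inl
        ⟨(hlt hin hjn).2 (by omega), (hlt hjn hkn).2 (by omega), (hlt hkn hln).2 (by omega)⟩⟩

lemma image_subset_range_of_mapsTo {n : ℕ} {σ : ℕ → ℕ} (hσ : ∀ x < n, σ x < n)
    {B : Finset ℕ} (hB : B ⊆ range n) : B.image σ ⊆ range n := by
  intro x hx
  obtain ⟨y, hy, rfl⟩ := mem_image.1 hx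
  exact mem_range.2 (hσ y (mem_range.1 (hB hy)))

lemma crosses_image_circleReflect_iff {n : ℕ} {B B' : Finset ℕ}
    (hB : B ⊆ range n) (hB' : B' ⊆ range n) :
    Crosses (B.image (circleReflect n)) (B'.image (circleReflect n)) ↔ Crosses B B' := by
  refine ⟨fun h => ?_, Crosses.image_circleReflect hB hB'⟩
  have hmaps : ∀ x < n, circleReflect n x < n := fun _ => circleReflect_lt
  simpa only [image_image, (circleReflect_involutive n).comp_self, image_id] using
    h.image_circleReflect (image_subset_range_of_mapsTo hmaps hB)
      (image_subset_range_of_mapsTo hmaps hB')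

lemma Function.Involutive.finset_image {α : Type*} [DecidableEq α] {g : α → α}
    (hg : Involutive g) : Involutive (Finset.image g) := fun s => by
  rw [image_image, hg.comp_self, image_id]

lemma Function.Involutive.mem_finsetImage_iff {α : Type*} [DecidableEq α] {g : α → α}
    (hg : Involutive g) {s : Finset α} {a : α} : a ∈ s.image g ↔ g a ∈ s := by
  refine ⟨fun h => ?_, fun h => ?_⟩
  · obtain ⟨b, hb, rfl⟩ := mem_image.1 h
    rwa [hg b]
  · simpa only [hg a] using mem_image_of_mem g h

lemma IsPartitionOf.subset_range {n : ℕ} {ρ : Finset (Finset ℕ)} (h : IsPartitionOf n ρ)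
    {B : Finset ℕ} (hB : B ∈ ρ) : B ⊆ range n :=
  h.2.2 ▸ le_sup (f := id) hB

lemma MSPartition.image {n : ℕ} {S : Finset ℕ} {ρ : Finset (Finset ℕ)} {σ : ℕ → ℕ}
    (hσ : Involutive σ) (hmaps : ∀ x < n, σ x < n) (h : MSPartition n S ρ) :
    MSPartition n (S.image σ) (ρ.image (·.image σ)) := by
  obtain ⟨⟨hne, hdisj, hsup⟩, hS, hcard⟩ := h
  have hrange : (range n).image σ = range n := by
    refine (image_subset_range_of_mapsTo hmaps subset_rfl).antisymm fun x hx => ?_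
    exact mem_image.2 ⟨σ x, mem_range.2 (hmaps x (mem_range.1 hx)), hσ x⟩
  refine ⟨⟨?_, ?_, ?_⟩, mem_image_of_mem _ hS, ?_⟩
  · simp only [mem_image]
    rintro _ ⟨C, hC, rfl⟩
    exact (hne C hC).image σ
  · simp only [mem_image]
    rintro _ ⟨C, hC, rfl⟩ _ ⟨D, hD, rfl⟩ hCD
    exact (disjoint_image hσ.injective).2 (hdisj C hC D hD (ne_of_apply_ne _ hCD))
  · rw [sup_eq_biUnion, image_biUnion, ← hrange, ← hsup, sup_eq_biUnion, biUnion_image]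
    rfl
  · simp only [mem_image]
    rintro _ ⟨C, hC, rfl⟩ hCS
    rw [card_image_of_injective _ hσ.injective]
    exact hcard C hC (ne_of_apply_ne _ hCS)

lemma RootConnected.comap {ρ : Finset (Finset ℕ)} {r : Finset ℕ → Finset ℕ → Prop}
    {S : Finset ℕ} {g : Finset ℕ → Finset ℕ} (hg : Involutive g)
    (hcross : ∀ B ∈ ρ, ∀ B' ∈ ρ, Crosses (g B) (g B') ↔ Crosses B B')
    (h : RootConnected ρ r S) :
    RootConnected (ρ.image g) (fun B B' => r (g B) (g B')) (g S) := by
  obtain ⟨⟨hedge, horient⟩, hacyc, hS, hsrc, huniq⟩ := h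
  have hmem {B : Finset ℕ} : B ∈ ρ.image g ↔ g B ∈ ρ := hg.mem_finsetImage_iff
  have hcross' {B B' : Finset ℕ} (hB : g B ∈ ρ) (hB' : g B' ∈ ρ) :
      Crosses (g B) (g B') ↔ Crosses B B' := by
    simpa only [hg _] using (hcross _ hB _ hB').symm
  refine ⟨⟨fun B B' hr => ?_, fun B hB B' hB' hne hc => ?_⟩, fun B hcyc => ?_,
    mem_image_of_mem g hS, fun B' => by simpa only [hg S] using hsrc (g B'), fun B hB hno => ?_⟩
  · obtain ⟨hB, hB', hne, hc⟩ := hedge _ _ hr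
    exact ⟨hmem.2 hB, hmem.2 hB', ne_of_apply_ne g hne, (hcross' hB hB').1 hc⟩
  · rw [hmem] at hB hB'
    exact horient _ hB _ hB' (hg.injective.ne hne) ((hcross' hB hB').2 hc)
  · exact hacyc (g B) (Relation.TransGen.lift g (fun _ _ hab => hab) _ _ hcyc)
  · have hsource : ∀ B', ¬ r B' (g B) := fun B' hr => hno (g B') (by simpa only [hg B'] using hr)
    rw [← hg B, huniq _ (hmem.1 hB) hsource]

lemma countA_image_eq {n : ℕ} {σ : ℕ → ℕ} (hσ : Involutive σ) (hmaps : ∀ x < n, σ x < n)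
    (hcross : ∀ B B', B ⊆ range n → B' ⊆ range n →
      (Crosses (B.image σ) (B'.image σ) ↔ Crosses B B'))
    (S : Finset ℕ) : countA n (S.image σ) = countA n S := by
  set g : Finset ℕ → Finset ℕ := Finset.image σ
  have hg : Involutive g := hσ.finset_image
  let Φ : Finset (Finset ℕ) × (Finset ℕ → Finset ℕ → Prop) →
      Finset (Finset ℕ) × (Finset ℕ → Finset ℕ → Prop) :=
    fun p => (p.1.image g, fun B B' => p.2 (g B) (g B'))
  have hΦ : Involutive Φ := fun p => by
    refine Prod.ext ?_ ?_
    · simp only [Φ, image_image, hg.comp_self, image_id]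
    · funext B B'
      simp only [Φ, hg _]
  have htransport (T : Finset ℕ) (p : Finset (Finset ℕ) × (Finset ℕ → Finset ℕ → Prop))
      (hp : MSPartition n T p.1 ∧ RootConnected p.1 p.2 T) :
      MSPartition n (g T) (Φ p).1 ∧ RootConnected (Φ p).1 (Φ p).2 (g T) :=
    ⟨hp.1.image hσ hmaps, hp.2.comap hg fun B hB B' hB' =>
      hcross B B' (hp.1.1.subset_range hB) (hp.1.1.subset_range hB')⟩
  refine Nat.card_congr (hΦ.toPerm _ |>.subtypeEquiv fun p => ⟨fun hp => ?_, fun hp => ?_⟩)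
  · simpa only [hΦ.coe_toPerm, hg S] using htransport _ p hp
  · simpa only [hΦ.coe_toPerm, hΦ p] using htransport _ _ hp

lemma countA_image_circleReflect (n : ℕ) (S : Finset ℕ) :
    countA n (S.image (circleReflect n)) = countA n S :=
  countA_image_eq (circleReflect_involutive n) (fun _ => circleReflect_lt)
    (fun _ _ => crosses_image_circleReflect_iff) S

/-- Symmetry of the refined Lassalle sequence:
`A_{k+1}(ℓ) = A_{k+1}(2k+2-ℓ)` for `1 ≤ ℓ ≤ 2k+1`, where
`A_{k+1}(ℓ) = countA (2k+2) {0, ℓ}` counts root-connected orientations of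
crossing graphs of perfect matchings of `{0,...,2k+1}` with root `{0, ℓ}`. -/
theorem refined_lassalle_symmetric (k : ℕ) (l : ℕ) (h1 : 1 ≤ l) (h2 : l ≤ 2 * k + 1) :
    countA (2 * k + 2) {0, l} = countA (2 * k + 2) {0, 2 * k + 2 - l} := by
  have hroot : ({0, l} : Finset ℕ).image (circleReflect (2 * k + 2)) = {0, 2 * k + 2 - l} := by
    rw [image_insert, image_singleton]
    unfold circleReflect
    congr 2; split_ifs <;> omega
  rw [← hroot, countA_image_circleReflect]
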